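/- arXiv:2603.21555 — 3 statements merged into one kernel-verified Lean document; each statement's English description precedes it below -/
import Mathlib

section
/- For every integer m ≥ 0 and every real T > 1 with T ∉ {x n : n ∈ ℕ}, one has Σ_{n : x n < T} log^m(x n)/(x n) = A_m(T) + (log^m(T)/T)·Q(T) + B_m + ∫₁ᵀ (log^m(t) − m·log^{m−1}(t))/t² · Q(t) dt, where B_0 = −Q(1) and B_m = 0 for m ≥ 1, and where for m = 0 the integrand is interpreted as Q(t)/t². -/
/-- The subtracted term `A_m(T) = (1/(2π(m+1)(m+2)))·log^{m+1}(T)·log(T^{m+1}/(2π)^{m+2})`. -/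
noncomputable def ACoeff (m : ℕ) (T : ℝ) : ℝ :=
  1 / (2 * Real.pi * (m + 1) * (m + 2)) * Real.log T ^ (m + 1) *
    Real.log (T ^ (m + 1) / (2 * Real.pi) ^ (m + 2))

/-!
Abel summation writes `∑_{x n < T} f (x n)` as the Stieltjes integral `∫₁ᵀ f dN`.
Splitting `N = L + Q`, the smooth part `∫₁ᵀ f L'` with `f t = log^m t / t` and
`L' t = log (t / 2π) / 2π` has the closed form `A_m(T)`, while integrating `∫₁ᵀ f dQ` by
parts gives `Q(T) f(T) - Q(1) f(1) - ∫₁ᵀ Q f'`. The constant `B_m` is `-Q(1) f(1)`, as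
`f(1) = 0 ^ m`.
-/

open MeasureTheory Set Finset intervalIntegral Real Filter

section AbelSummation

variable {ι : Type*} {s : Finset ι} {x : ι → ℝ} {f f' g L L' Q : ℝ → ℝ} {a b y : ℝ}

theorem IntervalIntegrable.ite_lt (hg : IntervalIntegrable g volume a b) :
    IntervalIntegrable (fun t => if y < t then g t else 0) volume a b := by
  have hind : (fun t => if y < t then g t else 0) = (Ioi y).indicator g := by
    ext t; simp [indicator_apply]
  rw [hind]
  exact ⟨hg.1.indicator measurableSet_Ioi, hg.2.indicator measurableSet_Ioi⟩

theorem intervalIntegral.integral_ite_lt (hy : y ∈ Icc a b)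
    (hg : IntervalIntegrable g volume a b) :
    ∫ t in a..b, (if y < t then g t else 0) = ∫ t in y..b, g t := by
  have hind : IntervalIntegrable ({t | t ≤ y}.indicator g) volume a b :=
    ⟨hg.1.indicator measurableSet_Iic, hg.2.indicator measurableSet_Iic⟩
  have hsplit :
      (fun t => if y < t then g t else 0) = fun t => g t - {t | t ≤ y}.indicator g t := by
    ext t
    by_cases h : y < t <;> simp [h, not_le.mpr, not_lt.mp]
  rw [hsplit, integral_sub hg hind, integral_indicator hy,
    integral_interval_sub_left hg (hg.mono_set (uIcc_subset_uIcc_left (Icc_subset_uIcc hy)))]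

theorem Finset.sum_ite_lt_eq_card_filter_mul (t : ℝ) :
    ∑ i ∈ s, (if x i < t then g t else 0) = #{i ∈ s | x i < t} * g t := by
  rw [← sum_filter, sum_const, nsmul_eq_mul]

theorem IntervalIntegrable.card_filter_lt_mul (hg : IntervalIntegrable g volume a b) :
    IntervalIntegrable (fun t => (#{i ∈ s | x i < t} : ℝ) * g t) volume a b := by
  simp_rw [← Finset.sum_ite_lt_eq_card_filter_mul]
  simpa only [Finset.sum_fn] using IntervalIntegrable.sum s fun i _ => hg.ite_lt (y := x i)

theorem sum_comp_eq_card_mul_sub_integral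
    (hx : ∀ i ∈ s, x i ∈ Icc a b) (hf : ∀ t ∈ Icc a b, HasDerivAt f (f' t) t)
    (hf' : IntervalIntegrable f' volume a b) :
    ∑ i ∈ s, f (x i) = #s * f b - ∫ t in a..b, (#{i ∈ s | x i < t} : ℝ) * f' t := by
  have hftc : ∀ i ∈ s, f (x i) = f b - ∫ t in a..b, (if x i < t then f' t else 0) := by
    intro i hi
    have hsub : uIcc (x i) b ⊆ Icc a b := by
      rw [uIcc_of_le (hx i hi).2]; exact Icc_subset_Icc_left (hx i hi).1
    rw [integral_ite_lt (hx i hi) hf', integral_eq_sub_of_hasDerivAt (fun t ht => hf t (hsub ht))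
      (hf'.mono_set (hsub.trans Icc_subset_uIcc)), sub_sub_cancel]
  rw [sum_congr rfl hftc, sum_sub_distrib, sum_const, nsmul_eq_mul,
    ← integral_finsetSum fun i _ => hf'.ite_lt]
  simp_rw [Finset.sum_ite_lt_eq_card_filter_mul]

theorem sum_comp_eq_integral_mul_add_sub_integral (hab : a ≤ b)
    (hx : ∀ i ∈ s, x i ∈ Ico a b) (hf : ∀ t ∈ Icc a b, HasDerivAt f (f' t) t)
    (hf' : IntervalIntegrable f' volume a b) (hL : ∀ t ∈ Icc a b, HasDerivAt L (L' t) t)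
    (hL' : IntervalIntegrable L' volume a b)
    (hQ : ∀ t ∈ Icc a b, Q t = #{i ∈ s | x i < t} - L t) :
    ∑ i ∈ s, f (x i) =
      (∫ t in a..b, L' t * f t) + Q b * f b - Q a * f a - ∫ t in a..b, Q t * f' t := by
  rw [← uIcc_of_le hab] at hf hL hQ
  have hLf' : IntervalIntegrable (fun t => L t * f' t) volume a b :=
    hf'.continuousOn_mul fun t ht => (hL t ht).continuousAt.continuousWithinAt
  have hQf' : ∫ t in a..b, Q t * f' t =
      (∫ t in a..b, (#{i ∈ s | x i < t} : ℝ) * f' t) - ∫ t in a..b, L t * f' t := by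
    rw [← integral_sub hf'.card_filter_lt_mul hLf']
    exact integral_congr fun t ht => by rw [hQ t ht, sub_mul]
  have hQa : Q a = -L a := by
    rw [hQ a left_mem_uIcc, filter_false_of_mem fun i hi => not_lt.mpr (hx i hi).1]
    simp
  have hQb : Q b = #s - L b := by
    rw [hQ b right_mem_uIcc, filter_true_of_mem fun i hi => (hx i hi).2]
  rw [sum_comp_eq_card_mul_sub_integral (fun i hi => Ico_subset_Icc_self (hx i hi))
      (fun t ht => hf t (uIcc_of_le hab ▸ ht)) hf', hQf', hQa, hQb,
    integral_mul_deriv_eq_deriv_mul hL hf hL' hf']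
  ring

end AbelSummation

theorem Monotone.exists_lt_iff_lt_of_tendsto_atTop {α : Type*} [LinearOrder α] {x : ℕ → α}
    (hx : Monotone x) (hlim : Tendsto x atTop atTop) (T : α) : ∃ K, ∀ n, x n < T ↔ n < K := by
  have hex : ∃ n, T ≤ x n := (hlim.eventually_ge_atTop T).exists
  refine ⟨Nat.find hex, fun n => ⟨fun h => ?_, fun h => not_le.mp (Nat.find_min hex h)⟩⟩
  by_contra hn
  exact (Nat.find_spec hex).not_gt ((hx (not_lt.mp hn)).trans_lt h)

theorem tsum_ite_eq_sum_range {M : Type*} [AddCommMonoid M] [TopologicalSpace M] {p : ℕ → Prop}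
    [DecidablePred p] {K : ℕ} (hK : ∀ n, p n ↔ n < K) (g : ℕ → M) :
    ∑' n, (if p n then g n else 0) = ∑ n ∈ range K, g n := by
  rw [sum_eq_tsum_indicator]
  exact tsum_congr fun n => by simp [indicator_apply, hK]

theorem Nat.card_lt_eq_card_filter_range {α : Type*} [LinearOrder α] {x : ℕ → α} {T t : α}
    {K : ℕ} (hK : ∀ n, x n < T ↔ n < K) (ht : t ≤ T) :
    Nat.card {n // x n < t} = #{n ∈ range K | x n < t} :=
  Nat.subtype_card _ fun n => by simpa using fun h => (hK n).1 (h.trans_le ht)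

theorem intervalIntegrable_of_forall_pos_continuousAt {g : ℝ → ℝ} {a b : ℝ} (ha : 0 < a)
    (hb : 0 < b) (hg : ∀ t, 0 < t → ContinuousAt g t) : IntervalIntegrable g volume a b :=
  ContinuousOn.intervalIntegrable <| continuousOn_of_forall_continuousAt fun t ht =>
    hg t ((lt_min ha hb).trans_le ht.1)

theorem hasDerivAt_log_pow_div (m : ℕ) {t : ℝ} (ht : t ≠ 0) :
    HasDerivAt (fun s => log s ^ m / s) ((m * log t ^ (m - 1) - log t ^ m) / t ^ 2) t := by
  refine (((hasDerivAt_log ht).pow m).div (hasDerivAt_id t) ht).congr_deriv ?_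
  simp only [id, Pi.pow_apply]
  field_simp

theorem hasDerivAt_div_mul_log_div_sub_div (C : ℝ) {c t : ℝ} (hc : c ≠ 0) (ht : t ≠ 0) :
    HasDerivAt (fun s => C + s / c * log (s / c) - s / c) (log (t / c) / c) t := by
  have hdiv : HasDerivAt (fun s => s / c) (1 / c) t := (hasDerivAt_id t).div_const c
  refine (((hdiv.mul (hdiv.log (div_ne_zero ht hc))).const_add C).sub hdiv).congr_deriv ?_
  field_simp
  ring

theorem ACoeff_eq (m : ℕ) (T : ℝ) :
    ACoeff m T =
      (log T ^ (m + 2) / (m + 2) - log (2 * π) * (log T ^ (m + 1) / (m + 1))) / (2 * π) := by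
  rcases eq_or_ne T 0 with rfl | hT
  · simp [ACoeff]
  rw [ACoeff, log_div (pow_ne_zero _ hT) (pow_ne_zero _ (by positivity)), log_pow, log_pow]
  field_simp
  push_cast
  ring

theorem hasDerivAt_ACoeff (m : ℕ) {t : ℝ} (ht : t ≠ 0) :
    HasDerivAt (ACoeff m) (log (t / (2 * π)) / (2 * π) * (log t ^ m / t)) t := by
  have hlog := hasDerivAt_log ht
  rw [funext (ACoeff_eq m)]
  refine ((((hlog.pow (m + 2)).div_const _).sub
    (((hlog.pow (m + 1)).div_const _).const_mul _)).div_const _).congr_deriv ?_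
  rw [log_div ht (by positivity)]
  push_cast
  field_simp
  ring

theorem ACoeff_one (m : ℕ) : ACoeff m 1 = 0 := by
  simp [ACoeff]

theorem integral_log_div_mul_log_pow_div_eq_ACoeff (m : ℕ) {T : ℝ} (hT : 0 < T) :
    ∫ t in (1 : ℝ)..T, log (t / (2 * π)) / (2 * π) * (log t ^ m / t) = ACoeff m T := by
  rw [integral_eq_sub_of_hasDerivAt
      (fun t ht => hasDerivAt_ACoeff m ((lt_min one_pos hT).trans_le ht.1).ne'),
    ACoeff_one, sub_zero]
  exact intervalIntegrable_of_forall_pos_continuousAt one_pos hT fun t ht => by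
    fun_prop (disch := positivity)

theorem sum_log_pow_div_eq_of_mem_Ico {ι : Type*} {s : Finset ι} {x : ι → ℝ} {Q : ℝ → ℝ}
    (m : ℕ) {T : ℝ} (hT : 1 < T) (hx : ∀ i ∈ s, x i ∈ Ico 1 T)
    (hQ : ∀ t ∈ Icc 1 T, Q t =
      #{i ∈ s | x i < t} - (7 / 8 + t / (2 * π) * log (t / (2 * π)) - t / (2 * π))) :
    ∑ i ∈ s, log (x i) ^ m / x i =
      ACoeff m T + log T ^ m / T * Q T + (if m = 0 then -Q 1 else 0) +
        ∫ t in (1 : ℝ)..T, (log t ^ m - m * log t ^ (m - 1)) / t ^ 2 * Q t := by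
  have hT0 : 0 < T := one_pos.trans hT
  have hf' :
      IntervalIntegrable (fun t => (m * log t ^ (m - 1) - log t ^ m) / t ^ 2) volume 1 T :=
    intervalIntegrable_of_forall_pos_continuousAt one_pos hT0 fun t ht => by
      fun_prop (disch := positivity)
  have hL' : IntervalIntegrable (fun t => log (t / (2 * π)) / (2 * π)) volume 1 T :=
    intervalIntegrable_of_forall_pos_continuousAt one_pos hT0 fun t ht => by
      fun_prop (disch := positivity)
  have hQf' : ∫ t in (1 : ℝ)..T, (log t ^ m - m * log t ^ (m - 1)) / t ^ 2 * Q t =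
      -∫ t in (1 : ℝ)..T, Q t * ((m * log t ^ (m - 1) - log t ^ m) / t ^ 2) := by
    rw [← intervalIntegral.integral_neg]
    congr 1 with t
    ring
  rw [sum_comp_eq_integral_mul_add_sub_integral hT.le hx
      (fun t ht => hasDerivAt_log_pow_div m (one_pos.trans_le ht.1).ne') hf'
      (fun t ht => hasDerivAt_div_mul_log_div_sub_div _ (by positivity)
        (one_pos.trans_le ht.1).ne') hL' hQ,
    integral_log_div_mul_log_pow_div_eq_ACoeff m hT0, hQf', log_one, zero_pow_eq, div_one]
  split_ifs <;> ring

theorem sum_log_pow_div_eq_general (x : ℕ → ℝ) (hmono : Monotone x) (hx0 : 1 < x 0)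
    (hlim : Filter.Tendsto x Filter.atTop Filter.atTop)
    (N : ℝ → ℕ) (hN : ∀ T : ℝ, N T = Nat.card {n : ℕ // x n < T})
    (L : ℝ → ℝ)
    (hL : ∀ T : ℝ, L T = 7 / 8 + T / (2 * Real.pi) * Real.log (T / (2 * Real.pi))
      - T / (2 * Real.pi))
    (Q : ℝ → ℝ) (hQ : ∀ T : ℝ, Q T = (N T : ℝ) - L T)
    (m : ℕ) (T : ℝ) (hT1 : 1 < T) :
    (∑' n : ℕ, if x n < T then Real.log (x n) ^ m / x n else 0) =
      ACoeff m T + Real.log T ^ m / T * Q T + (if m = 0 then -Q 1 else 0) +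
        ∫ t in (1 : ℝ)..T,
          (Real.log t ^ m - m * Real.log t ^ (m - 1)) / t ^ 2 * Q t := by
  obtain ⟨K, hK⟩ := hmono.exists_lt_iff_lt_of_tendsto_atTop hlim T
  rw [tsum_ite_eq_sum_range hK]
  refine sum_log_pow_div_eq_of_mem_Ico m hT1 (fun n hn => ⟨?_, (hK n).2 (mem_range.1 hn)⟩)
    fun t ht => by rw [hQ, hN, hL, Nat.card_lt_eq_card_filter_range hK ht.2]
  exact (hx0.trans_le (hmono n.zero_le)).le

/-- For a nondecreasing sequence `x` with `x 0 > 1` and `x n → ∞`, with counting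
function `N`, `L(T) = 7/8 + (T/(2π)) log(T/(2π)) - T/(2π)` and `Q = N - L`: for every
`m ≥ 0` and `T > 1` not in the range of `x`,
`∑_{x n < T} log^m(x n)/(x n) = A_m(T) + (log^m T / T) Q(T) + B_m
  + ∫₁ᵀ (log^m t - m log^{m-1} t)/t² · Q(t) dt`,
where `B_0 = -Q(1)` and `B_m = 0` for `m ≥ 1`.  (For `m = 0` the integrand
`log^0 t - 0·log^{0-1} t = 1` gives `Q(t)/t²` as required.) -/
theorem sum_log_pow_div_eq (x : ℕ → ℝ) (hmono : Monotone x) (hx0 : 1 < x 0)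
    (hlim : Filter.Tendsto x Filter.atTop Filter.atTop)
    (N : ℝ → ℕ) (hN : ∀ T : ℝ, N T = Nat.card {n : ℕ // x n < T})
    (L : ℝ → ℝ)
    (hL : ∀ T : ℝ, L T = 7 / 8 + T / (2 * Real.pi) * Real.log (T / (2 * Real.pi))
      - T / (2 * Real.pi))
    (Q : ℝ → ℝ) (hQ : ∀ T : ℝ, Q T = (N T : ℝ) - L T)
    (m : ℕ) (T : ℝ) (hT1 : 1 < T) (hTx : T ∉ Set.range x) :
    (∑' n : ℕ, if x n < T then Real.log (x n) ^ m / x n else 0) =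
      ACoeff m T + Real.log T ^ m / T * Q T + (if m = 0 then -Q 1 else 0) +
        ∫ t in (1 : ℝ)..T,
          (Real.log t ^ m - m * Real.log t ^ (m - 1)) / t ^ 2 * Q t :=
  sum_log_pow_div_eq_general x hmono hx0 hlim N hN L hL Q hQ m T hT1
end

section
/- Let Q : [1,∞) → ℝ be measurable, bounded on [1,2], and suppose there exists K > 0 such that |Q(t)| ≤ K·log t for all t ≥ 2. For each integer j ≥ 0 set c_j = (−1)^j·∫₁^∞ log^j(t)·Q(t)/t² dt. Then each c_j is well defined (the integral converges absolutely), and for every complex s with |s−1| < 1, ∫₁^∞ t^{−s−1}·Q(t) dt = Σ_{j=0}^∞ c_j·(s−1)^j/j!, the series converging absolutely. -/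
open MeasureTheory Set Real

private lemma exp_image_Ioi' : Real.exp '' Set.Ioi (0:ℝ) = Set.Ioi 1 := by
  ext x
  constructor
  · rintro ⟨y, hy, rfl⟩
    simpa using Real.one_lt_exp_iff.2 hy
  · intro hx
    exact ⟨Real.log x, Real.log_pos hx, Real.exp_log (by linarith [Set.mem_Ioi.mp hx])⟩

private lemma smul_eq_gamma' (j : ℕ) :
    (fun x : ℝ => |Real.exp x| • (Real.log (Real.exp x) ^ j / (Real.exp x) ^ 2))
      = fun x : ℝ => Real.exp (-x) * x ^ ((j+1:ℝ) - 1) := by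
  funext x
  rw [smul_eq_mul, abs_of_pos (Real.exp_pos x), Real.log_exp, Real.exp_neg]
  rw [show ((j+1:ℝ) - 1) = ((j:ℕ):ℝ) by simp, Real.rpow_natCast]
  have h := (Real.exp_pos x).ne'
  field_simp

private lemma keyInt' (j : ℕ) :
    MeasureTheory.IntegrableOn (fun t : ℝ => Real.log t ^ j / t^2) (Set.Ici 1) := by
  rw [integrableOn_Ici_iff_integrableOn_Ioi, ← exp_image_Ioi',
    integrableOn_image_iff_integrableOn_abs_deriv_smul measurableSet_Ioi
      (fun x _ => (Real.hasDerivAt_exp x).hasDerivWithinAt) Real.exp_injective.injOn]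
  rw [show (fun x : ℝ => |Real.exp x| • ((fun t : ℝ => Real.log t ^ j / t^2) (Real.exp x)))
      = fun x : ℝ => Real.exp (-x) * x ^ ((j+1:ℝ) - 1) from smul_eq_gamma' j]
  exact Real.GammaIntegral_convergent (by positivity)

private lemma keyVal' (j : ℕ) :
    ∫ t in Set.Ici (1:ℝ), Real.log t ^ j / t^2 = (Nat.factorial j : ℝ) := by
  rw [MeasureTheory.integral_Ici_eq_integral_Ioi, ← exp_image_Ioi',
    integral_image_eq_integral_abs_deriv_smul measurableSet_Ioi
      (fun x _ => (Real.hasDerivAt_exp x).hasDerivWithinAt) Real.exp_injective.injOn]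
  rw [show (fun x : ℝ => |Real.exp x| • ((fun t : ℝ => Real.log t ^ j / t^2) (Real.exp x)))
      = fun x : ℝ => Real.exp (-x) * x ^ ((j+1:ℝ) - 1) from smul_eq_gamma' j]
  rw [← Real.Gamma_eq_integral (by positivity : (0:ℝ) < (j:ℝ)+1)]
  exact_mod_cast Real.Gamma_nat_eq_factorial j

/-- If `Q` is measurable, bounded on `[1,2]`, and `|Q t| ≤ K log t` for `t ≥ 2`
(for some `K > 0`), and `c_j = (-1)^j ∫₁^∞ log^j(t) Q(t)/t² dt`, then each integral
converges absolutely and, for every complex `s` with `|s-1| < 1`,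
`∫₁^∞ t^{-s-1} Q(t) dt = ∑_j c_j (s-1)^j / j!`, the series converging absolutely. -/
theorem integral_eq_expansion (Q : ℝ → ℝ) (hmeas : Measurable Q)
    (hbdd : ∃ M : ℝ, ∀ t ∈ Set.Icc (1 : ℝ) 2, |Q t| ≤ M)
    (hK : ∃ K > (0 : ℝ), ∀ t ≥ (2 : ℝ), |Q t| ≤ K * Real.log t)
    (c : ℕ → ℝ)
    (hc : ∀ j : ℕ, c j =
      (-1 : ℝ) ^ j * ∫ t in Set.Ici (1 : ℝ), Real.log t ^ j * Q t / t ^ 2) :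
    (∀ j : ℕ, MeasureTheory.IntegrableOn
      (fun t : ℝ => Real.log t ^ j * Q t / t ^ 2) (Set.Ici (1 : ℝ))) ∧
    ∀ s : ℂ, ‖s - 1‖ < 1 →
      Summable (fun j : ℕ => ‖(c j : ℂ) * (s - 1) ^ j / (Nat.factorial j : ℂ)‖) ∧
      (∫ t in Set.Ici (1 : ℝ), (t : ℂ) ^ (-s - 1) * (Q t : ℂ)) =
        ∑' j : ℕ, (c j : ℂ) * (s - 1) ^ j / (Nat.factorial j : ℂ) := by
  obtain ⟨M, hM⟩ := hbdd
  obtain ⟨K, hK0, hKlog⟩ := hK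
  have hM0 : 0 ≤ M := le_trans (abs_nonneg _) (hM 1 ⟨le_refl _, by norm_num⟩)
  -- pointwise bound on [1,∞)
  have hQ : ∀ t ∈ Set.Ici (1:ℝ), |Q t| ≤ M + K * Real.log t := by
    intro t ht
    rcases le_or_gt t 2 with h2 | h2
    · have := hM t ⟨ht, h2⟩
      have hl : 0 ≤ Real.log t := Real.log_nonneg ht
      nlinarith
    · have := hKlog t h2.le
      linarith
  -- measurability
  have hFm : ∀ j : ℕ, Measurable (fun t : ℝ => Real.log t ^ j * Q t / t ^ 2) := by
    intro j
    exact ((Real.measurable_log.pow_const j).mul hmeas).div (measurable_id.pow_const 2)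
  -- pointwise norm bound
  have habs : ∀ (j : ℕ) (t : ℝ), t ∈ Set.Ici (1:ℝ) →
      |Real.log t ^ j * Q t / t ^ 2| ≤
        M * (Real.log t ^ j / t ^ 2) + K * (Real.log t ^ (j+1) / t ^ 2) := by
    intro j t ht
    have ht1 : (1:ℝ) ≤ t := ht
    have hl : 0 ≤ Real.log t := Real.log_nonneg ht1
    have ht2 : (0:ℝ) < t ^ 2 := by positivity
    rw [abs_div, abs_mul, abs_pow, abs_of_nonneg hl, abs_of_pos ht2]
    have h1 : Real.log t ^ j * |Q t| / t ^ 2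
        ≤ Real.log t ^ j * (M + K * Real.log t) / t ^ 2 := by
      gcongr
      exact hQ t ht
    calc Real.log t ^ j * |Q t| / t ^ 2
        ≤ Real.log t ^ j * (M + K * Real.log t) / t ^ 2 := h1
      _ = M * (Real.log t ^ j / t ^ 2) + K * (Real.log t ^ (j+1) / t ^ 2) := by
          rw [pow_succ]; ring
  -- integrability of dominating function
  have hgint : ∀ j : ℕ, MeasureTheory.IntegrableOn
      (fun t : ℝ => M * (Real.log t ^ j / t ^ 2) + K * (Real.log t ^ (j+1) / t ^ 2))
      (Set.Ici 1) :=
    fun j => ((keyInt' j).const_mul M).add ((keyInt' (j+1)).const_mul K)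
  -- part 1
  have hA : ∀ j : ℕ, MeasureTheory.IntegrableOn
      (fun t : ℝ => Real.log t ^ j * Q t / t ^ 2) (Set.Ici (1 : ℝ)) := by
    intro j
    refine (hgint j).mono' (hFm j).aestronglyMeasurable ?_
    rw [ae_restrict_iff' measurableSet_Ici]
    exact Filter.Eventually.of_forall fun t ht => by
      rw [Real.norm_eq_abs]; exact habs j t ht
  refine ⟨hA, ?_⟩
  -- bound on the integral of the absolute value
  have hAle : ∀ j : ℕ, (∫ t in Set.Ici (1:ℝ), |Real.log t ^ j * Q t / t ^ 2|)
      ≤ M * (Nat.factorial j : ℝ) + K * (Nat.factorial (j+1) : ℝ) := by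
    intro j
    have := MeasureTheory.integral_mono_of_nonneg
      (f := fun t : ℝ => |Real.log t ^ j * Q t / t ^ 2|)
      (g := fun t : ℝ => M * (Real.log t ^ j / t ^ 2) + K * (Real.log t ^ (j+1) / t ^ 2))
      (μ := volume.restrict (Set.Ici 1))
      (Filter.Eventually.of_forall fun t => abs_nonneg _) (hgint j)
      ((ae_restrict_iff' measurableSet_Ici).mpr
        (Filter.Eventually.of_forall fun t ht => habs j t ht))
    calc (∫ t in Set.Ici (1:ℝ), |Real.log t ^ j * Q t / t ^ 2|)
        ≤ ∫ t in Set.Ici (1:ℝ),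
            (M * (Real.log t ^ j / t ^ 2) + K * (Real.log t ^ (j+1) / t ^ 2)) := this
      _ = M * (Nat.factorial j : ℝ) + K * (Nat.factorial (j+1) : ℝ) := by
          rw [MeasureTheory.integral_add ((keyInt' j).const_mul M)
            ((keyInt' (j+1)).const_mul K), MeasureTheory.integral_const_mul,
            MeasureTheory.integral_const_mul, keyVal' j, keyVal' (j+1)]
  have hAnn : ∀ j : ℕ, 0 ≤ ∫ t in Set.Ici (1:ℝ), |Real.log t ^ j * Q t / t ^ 2| :=
    fun j => MeasureTheory.integral_nonneg fun t => abs_nonneg _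
  have hcle : ∀ j : ℕ, |c j| ≤ ∫ t in Set.Ici (1:ℝ), |Real.log t ^ j * Q t / t ^ 2| := by
    intro j
    rw [hc j, abs_mul, abs_pow, abs_neg, abs_one, one_pow, one_mul]
    simpa [Real.norm_eq_abs] using
      MeasureTheory.norm_integral_le_integral_norm
        (μ := volume.restrict (Set.Ici 1)) (fun t : ℝ => Real.log t ^ j * Q t / t ^ 2)
  -- part 2
  intro s hs
  set r : ℝ := ‖s - 1‖ with hr
  have hr0 : 0 ≤ r := norm_nonneg _
  have hw : ‖(1 - s : ℂ)‖ = r := by rw [hr, norm_sub_rev]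
  set F : ℕ → ℝ → ℂ := fun j t =>
    (1 - s) ^ j / (Nat.factorial j : ℂ) * ((Real.log t ^ j * Q t / t ^ 2 : ℝ) : ℂ) with hF
  have hFint : ∀ j : ℕ, MeasureTheory.Integrable (F j) (volume.restrict (Set.Ici 1)) :=
    fun j => ((hA j).ofReal).const_mul _
  have hfac : ∀ j : ℕ, (0:ℝ) < (Nat.factorial j : ℝ) := fun j => by
    exact_mod_cast (Nat.factorial_pos j)
  -- norm of F j
  have hFnorm : ∀ (j : ℕ) (t : ℝ),
      ‖F j t‖ = r ^ j / (Nat.factorial j : ℝ) * |Real.log t ^ j * Q t / t ^ 2| := by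
    intro j t
    simp only [hF]
    rw [norm_mul, norm_div, norm_pow, hw, Complex.norm_real, Complex.norm_natCast,
      Real.norm_eq_abs]
  have hFnormint : ∀ j : ℕ, (∫ t in Set.Ici (1:ℝ), ‖F j t‖)
      = r ^ j / (Nat.factorial j : ℝ) *
        ∫ t in Set.Ici (1:ℝ), |Real.log t ^ j * Q t / t ^ 2| := by
    intro j
    simp_rw [hFnorm]
    rw [MeasureTheory.integral_const_mul]
  -- the summable bound
  have hBle : ∀ j : ℕ, r ^ j / (Nat.factorial j : ℝ) *
      (∫ t in Set.Ici (1:ℝ), |Real.log t ^ j * Q t / t ^ 2|)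
      ≤ M * r ^ j + K * (((j:ℝ) + 1) * r ^ j) := by
    intro j
    have h1 : r ^ j / (Nat.factorial j : ℝ) *
        (∫ t in Set.Ici (1:ℝ), |Real.log t ^ j * Q t / t ^ 2|)
        ≤ r ^ j / (Nat.factorial j : ℝ) *
          (M * (Nat.factorial j : ℝ) + K * (Nat.factorial (j+1) : ℝ)) := by
      gcongr
      exact hAle j
    refine h1.trans (le_of_eq ?_)
    have h2 : (Nat.factorial (j+1) : ℝ) = ((j:ℝ) + 1) * (Nat.factorial j : ℝ) := by
      rw [Nat.factorial_succ]; push_cast; ring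
    rw [h2]
    field_simp
  have hbsum : Summable (fun j : ℕ => M * r ^ j + K * (((j:ℝ) + 1) * r ^ j)) := by
    have h1 : Summable fun j : ℕ => r ^ j := summable_geometric_of_lt_one hr0 hs
    have h2 : Summable fun j : ℕ => ((j:ℝ) + 1) * r ^ j := by
      have h3 : Summable fun j : ℕ => (j:ℝ) ^ 1 * r ^ j :=
        summable_pow_mul_geometric_of_norm_lt_one 1
          (by rwa [Real.norm_eq_abs, abs_of_nonneg hr0])
      have := h3.add h1
      refine this.congr fun j => by ring
    exact (h1.mul_left M).add (h2.mul_left K)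
  -- summability of the series of norms
  have hsum1 : Summable (fun j : ℕ => ‖(c j : ℂ) * (s - 1) ^ j / (Nat.factorial j : ℂ)‖) := by
    refine Summable.of_nonneg_of_le (fun j => norm_nonneg _) (fun j => ?_) hbsum
    have heq : ‖(c j : ℂ) * (s - 1) ^ j / (Nat.factorial j : ℂ)‖
        = |c j| * r ^ j / (Nat.factorial j : ℝ) := by
      simp [norm_div, norm_mul, norm_pow, Complex.norm_real, Real.norm_eq_abs,
        Complex.norm_natCast, hr]
    rw [heq]
    refine le_trans ?_ (hBle j)
    rw [show |c j| * r ^ j / (Nat.factorial j : ℝ)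
        = r ^ j / (Nat.factorial j : ℝ) * |c j| by ring]
    gcongr
    exact hcle j
  refine ⟨hsum1, ?_⟩
  -- summability of integrals of norms
  have hsum2 : Summable fun j : ℕ => ∫ t in Set.Ici (1:ℝ), ‖F j t‖ := by
    refine Summable.of_nonneg_of_le
      (fun j => MeasureTheory.integral_nonneg fun t => norm_nonneg _)
      (fun j => ?_) hbsum
    rw [hFnormint j]
    exact hBle j
  -- pointwise series identity
  have heqon : Set.EqOn (fun t : ℝ => (t : ℂ) ^ (-s - 1) * (Q t : ℂ))
      (fun t : ℝ => ∑' j : ℕ, F j t) (Set.Ici 1) := by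
    intro t ht
    have ht1 : (1:ℝ) ≤ t := ht
    have ht0 : (0:ℝ) < t := lt_of_lt_of_le one_pos ht1
    have htne : (t : ℂ) ≠ 0 := by exact_mod_cast ht0.ne'
    have hexpL : Complex.exp ((Real.log t : ℂ)) = (t : ℂ) := by
      rw [← Complex.ofReal_exp, Real.exp_log ht0]
    have hcpow : (t : ℂ) ^ (-s - 1)
        = Complex.exp ((1 - s) * (Real.log t : ℂ)) * ((t : ℂ) ^ 2)⁻¹ := by
      rw [Complex.cpow_def_of_ne_zero htne, ← Complex.ofReal_log ht0.le]
      rw [show (Real.log t : ℂ) * (-s - 1)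
          = (1 - s) * (Real.log t : ℂ) +
            -((Real.log t : ℂ) + (Real.log t : ℂ)) by ring]
      rw [Complex.exp_add, Complex.exp_neg, Complex.exp_add, hexpL]
      ring_nf
    have hFt : ∀ j : ℕ, F j t
        = ((1 - s) * (Real.log t : ℂ)) ^ j / (Nat.factorial j : ℂ)
          * ((Q t : ℂ) / (t : ℂ) ^ 2) := by
      intro j
      simp only [hF]
      rw [mul_pow]
      push_cast
      ring
    have hexp : ∑' j : ℕ, ((1 - s) * (Real.log t : ℂ)) ^ j / (Nat.factorial j : ℂ)
        = Complex.exp ((1 - s) * (Real.log t : ℂ)) := by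
      rw [Complex.exp_eq_exp_ℂ, NormedSpace.exp_eq_tsum_div]
    simp only
    rw [tsum_congr hFt, tsum_mul_right, hexp, hcpow]
    ring
  rw [MeasureTheory.setIntegral_congr_fun measurableSet_Ici heqon,
    ← MeasureTheory.integral_tsum_of_summable_integral_norm hFint hsum2]
  refine tsum_congr fun j => ?_
  have hI : (∫ t in Set.Ici (1:ℝ), Real.log t ^ j * Q t / t ^ 2) = (-1:ℝ) ^ j * c j := by
    rw [hc j, ← mul_assoc, ← mul_pow]
    norm_num
  simp only [hF]
  rw [MeasureTheory.integral_const_mul]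
  rw [show (∫ a in Set.Ici (1:ℝ), ((Real.log a ^ j * Q a / a ^ 2 : ℝ) : ℂ))
      = ((∫ a in Set.Ici (1:ℝ), Real.log a ^ j * Q a / a ^ 2 : ℝ) : ℂ) by exact integral_ofReal]
  rw [hI]
  push_cast
  have hps : ((1:ℂ) - s) * (-1) = s - 1 := by ring
  rw [show ((1:ℂ) - s) ^ j / (Nat.factorial j : ℂ) * ((-1) ^ j * (c j : ℂ))
      = (c j : ℂ) * (((1 - s) * (-1)) ^ j) / (Nat.factorial j : ℂ) by
        rw [mul_pow]; ring, hps]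
end

section
/- Let Q : [1,∞) → ℝ be measurable, bounded on [1,2], and suppose there exists K > 0 such that |Q(t)| ≤ K·log t for all t ≥ 2. Then for every complex s with |s−1| < 1, s·∫₁^∞ Q(t)·t^{−s−1} dt = Σ_{m=0}^∞ y_m·(s−1)^m/m!, where y_m = (−1)^m·∫₁^∞ (log^m(t) − m·log^{m−1}(t))·Q(t)/t² dt (interpreted as ∫₁^∞ Q(t)/t² dt when m = 0), each integral converging absolutely. -/
/-!
For `t ≥ 1`, `t^(-s-1) = t⁻² · exp((1 - s) log t)`; expanding the exponential gives
`∫ Q(t) t^(-s-1) dt = ∑ (1-s)^m/m! · a_m` with `a_m = ∫ log^m t · Q(t)/t² dt`. The interchange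
of sum and integral is dominated convergence: the absolute series sums to `|Q(t)| t^(|s-1|-2)`,
which is integrable because `Q` grows slower than every power of `t`. Multiplying by
`s = 1 + (s - 1)` and collecting the coefficient of `(s-1)^m` gives `(-1)^m (a_m - m a_{m-1}) / m!`.
-/

open MeasureTheory Real Set
open scoped Nat

lemma log_pow_le_factorial_div_mul_rpow {ε t : ℝ} (hε : 0 < ε) (ht : 1 ≤ t) (m : ℕ) :
    log t ^ m ≤ m ! / ε ^ m * t ^ ε := by
  have h := pow_div_factorial_le_exp _ (mul_nonneg hε.le (log_nonneg ht)) m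
  rw [mul_pow, div_le_iff₀ (by positivity)] at h
  rw [rpow_def_of_pos (by linarith), div_mul_eq_mul_div, le_div_iff₀ (by positivity),
    mul_comm (log t)]
  linarith

lemma integrableOn_Ici_of_norm_le_mul_rpow {E : Type*} [NormedAddCommGroup E] {f : ℝ → E}
    {a C β : ℝ} (ha : 0 < a) (hβ : β < -1)
    (hf : AEStronglyMeasurable f (volume.restrict (Ici a)))
    (hle : ∀ t ≥ a, ‖f t‖ ≤ C * t ^ β) : IntegrableOn f (Ici a) := by
  have hpow : IntegrableOn (fun t : ℝ => t ^ β) (Ici a) := by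
    rw [integrableOn_Ici_iff_integrableOn_Ioi]
    exact integrableOn_Ioi_rpow_of_lt hβ ha
  exact (hpow.const_mul C).mono' hf ((ae_restrict_mem measurableSet_Ici).mono hle)

lemma exists_abs_le_mul_rpow_of_abs_le_mul_log {Q : ℝ → ℝ} {M K δ : ℝ}
    (hM : ∀ t ∈ Icc (1 : ℝ) 2, |Q t| ≤ M) (hK : ∀ t ≥ (2 : ℝ), |Q t| ≤ K * log t)
    (hδ : 0 < δ) : ∃ C, ∀ t ≥ 1, |Q t| ≤ C * t ^ δ := by
  have hM0 : 0 ≤ M := (abs_nonneg _).trans (hM 1 ⟨le_rfl, by norm_num⟩)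
  have hK0 : 0 ≤ K :=
    nonneg_of_mul_nonneg_left ((abs_nonneg _).trans (hK 2 le_rfl)) (log_pos one_lt_two)
  refine ⟨M + K / δ, fun t ht => ?_⟩
  have htδ : 1 ≤ t ^ δ := one_le_rpow ht hδ.le
  have hlog : K * log t ≤ K / δ * t ^ δ := by
    rw [div_mul_eq_mul_div, mul_div_assoc]
    exact mul_le_mul_of_nonneg_left (log_le_rpow_div (by linarith) hδ) hK0
  rcases le_or_gt t 2 with h2 | h2
  · nlinarith [hM t ⟨ht, h2⟩, div_nonneg hK0 hδ.le]
  · nlinarith [hK t h2.le]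

lemma integrableOn_mul_div_sq_of_abs_le_rpow {Q : ℝ → ℝ} (hQ : Measurable Q)
    (hQ_growth : ∀ δ : ℝ, 0 < δ → ∃ C, ∀ t ≥ 1, |Q t| ≤ C * t ^ δ) {g : ℝ → ℝ}
    (hg : Measurable g) {D γ : ℝ} (hγ : γ < 1) (hg_le : ∀ t ≥ 1, |g t| ≤ D * t ^ γ) :
    IntegrableOn (fun t => g t * Q t / t ^ 2) (Ici 1) := by
  obtain ⟨C, hC⟩ := hQ_growth ((1 - γ) / 2) (by linarith)
  refine integrableOn_Ici_of_norm_le_mul_rpow (C := D * C) (β := (γ - 3) / 2) one_pos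
    (by linarith) (by fun_prop : Measurable _).aestronglyMeasurable fun t ht => ?_
  have ht0 : 0 < t := by linarith
  have hpow : t ^ ((γ - 3) / 2) = t ^ γ * t ^ ((1 - γ) / 2) / t ^ 2 := by
    rw [← rpow_add ht0, ← rpow_natCast, ← rpow_sub ht0]
    congr 1
    push_cast
    ring
  rw [hpow, norm_div, norm_mul, norm_pow, norm_eq_abs, norm_eq_abs, norm_eq_abs,
    abs_of_pos ht0, ← mul_div_assoc, mul_mul_mul_comm]
  refine div_le_div_of_nonneg_right ?_ (by positivity)
  exact mul_le_mul (hg_le t ht) (hC t ht) (abs_nonneg _) ((abs_nonneg _).trans (hg_le t ht))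

lemma integrableOn_log_pow_mul_div_sq {Q : ℝ → ℝ} (hQ : Measurable Q)
    (hQ_growth : ∀ δ : ℝ, 0 < δ → ∃ C, ∀ t ≥ 1, |Q t| ≤ C * t ^ δ) (m : ℕ) :
    IntegrableOn (fun t => log t ^ m * Q t / t ^ 2) (Ici 1) :=
  integrableOn_mul_div_sq_of_abs_le_rpow hQ hQ_growth (by fun_prop) (γ := 1 / 2) (by norm_num) fun t ht => by
    rw [abs_of_nonneg (pow_nonneg (log_nonneg ht) m)]
    exact log_pow_le_factorial_div_mul_rpow (by norm_num) ht m

lemma hasSum_integral_mul_cpow_neg_sub_one {Q : ℝ → ℝ} (hQ : Measurable Q)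
    (hQ_growth : ∀ δ : ℝ, 0 < δ → ∃ C, ∀ t ≥ 1, |Q t| ≤ C * t ^ δ) {s : ℂ} (hs : ‖s - 1‖ < 1) :
    HasSum (fun m : ℕ => (1 - s) ^ m / m ! * ((∫ t in Ici 1, log t ^ m * Q t / t ^ 2 : ℝ) : ℂ))
      (∫ t in Ici (1 : ℝ), (Q t : ℂ) * (t : ℂ) ^ (-s - 1)) := by
  set r := ‖s - 1‖
  have hbound_sum (t : ℝ) : HasSum (fun m : ℕ => (r * log t) ^ m / m ! * (|Q t| / t ^ 2))
      (exp (r * log t) * (|Q t| / t ^ 2)) := by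
    rw [exp_eq_exp_ℝ]
    exact (NormedSpace.expSeries_div_hasSum_exp (r * log t)).mul_right (|Q t| / t ^ 2)
  have hbound_int : IntegrableOn (fun t => exp (r * log t) * (|Q t| / t ^ 2)) (Ici 1) := by
    simp_rw [← mul_div_assoc]
    refine integrableOn_mul_div_sq_of_abs_le_rpow hQ.abs (by simpa only [abs_abs] using hQ_growth) (by fun_prop) (D := 1) hs
      fun t ht => ?_
    rw [abs_of_pos (exp_pos _), one_mul, rpow_def_of_pos (by linarith), mul_comm]
  have key := hasSum_integral_of_dominated_convergence (μ := volume.restrict (Ici 1))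
    (F := fun (m : ℕ) t => (1 - s) ^ m / m ! * ((log t ^ m * Q t / t ^ 2 : ℝ) : ℂ))
    (f := fun t => (Q t : ℂ) * (t : ℂ) ^ (-s - 1))
    (fun m t => (r * log t) ^ m / m ! * (|Q t| / t ^ 2))
    (fun m => (Measurable.aestronglyMeasurable (by fun_prop)))
    (fun m => (ae_restrict_mem measurableSet_Ici).mono fun t ht => ?_)
    (Filter.Eventually.of_forall fun t => (hbound_sum t).summable)
    (by simp only [fun t => (hbound_sum t).tsum_eq]; exact hbound_int)
    ((ae_restrict_mem measurableSet_Ici).mono fun t ht => ?_)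
  · simpa only [integral_const_mul, integral_complex_ofReal] using key
  · have hlog : 0 ≤ log t := log_nonneg ht
    refine le_of_eq ?_
    rw [norm_mul, norm_div, norm_pow, Complex.norm_real, Complex.norm_natCast, norm_eq_abs,
      abs_div, abs_mul, abs_pow, abs_of_nonneg hlog, abs_of_nonneg (sq_nonneg t), norm_sub_rev,
      mul_pow]
    ring
  · have ht0 : (t : ℂ) ≠ 0 := by exact_mod_cast (zero_lt_one.trans_le ht).ne'
    have hexp : HasSum (fun m : ℕ => ((1 - s) * log t) ^ m / m ! * ((Q t : ℂ) / (t : ℂ) ^ 2))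
        (Complex.exp ((1 - s) * log t) * ((Q t : ℂ) / (t : ℂ) ^ 2)) := by
      rw [Complex.exp_eq_exp_ℂ]
      exact (NormedSpace.expSeries_div_hasSum_exp ((1 - s) * log t)).mul_right
        ((Q t : ℂ) / (t : ℂ) ^ 2)
    have hcpow : (t : ℂ) ^ (-s - 1) = Complex.exp ((1 - s) * log t) / (t : ℂ) ^ 2 := by
      rw [show -s - 1 = (1 - s) - (2 : ℕ) by push_cast; ring, Complex.cpow_sub _ _ ht0,
        Complex.cpow_natCast, Complex.cpow_def_of_ne_zero ht0,
        Complex.ofReal_log (zero_le_one.trans ht), mul_comm]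
    have hterm (m : ℕ) : (1 - s) ^ m / m ! * ((log t ^ m * Q t / t ^ 2 : ℝ) : ℂ) =
        ((1 - s) * log t) ^ m / m ! * ((Q t : ℂ) / (t : ℂ) ^ 2) := by
      rw [mul_pow]
      push_cast
      ring
    rw [funext hterm, hcpow, mul_div_left_comm]
    exact hexp

lemma hasSum_mul_of_hasSum_one_sub_pow_div_factorial {a : ℕ → ℝ} {s I : ℂ}
    (h : HasSum (fun m : ℕ => (1 - s) ^ m / m ! * (a m : ℂ)) I) :
    HasSum (fun m : ℕ => (((-1) ^ m * (a m - m * a (m - 1)) : ℝ) : ℂ) * (s - 1) ^ m / m !)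
      (s * I) := by
  have hneg (m : ℕ) : (1 - s) ^ m = (-1) ^ m * (s - 1) ^ m := by rw [← neg_pow, neg_sub]
  have hsucc (n : ℕ) : (((-1) ^ (n + 1) * (a (n + 1) - (n + 1 : ℕ) * a (n + 1 - 1)) : ℝ) : ℂ) *
      (s - 1) ^ (n + 1) / (n + 1)! =
        (1 - s) ^ (n + 1) / (n + 1)! * (a (n + 1) : ℂ) + (s - 1) * ((1 - s) ^ n / n ! * a n) := by
    rw [Nat.add_sub_cancel, Nat.factorial_succ, hneg, hneg]
    push_cast
    field_simp
    ring
  have htail : HasSum (fun n => (1 - s) ^ (n + 1) / (n + 1)! * (a (n + 1) : ℂ))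
      (I - (1 - s) ^ 0 / (0 : ℕ)! * (a 0 : ℂ)) := by
    simpa only [Finset.sum_range_one] using (hasSum_nat_add_iff' 1).2 h
  have hshift := htail.add (h.mul_left (s - 1))
  have hterms := HasSum.zero_add
    (f := fun m : ℕ => (((-1) ^ m * (a m - m * a (m - 1)) : ℝ) : ℂ) * (s - 1) ^ m / m !)
    (by simp only [hsucc]; exact hshift)
  convert hterms using 1
  push_cast
  simp only [pow_zero, zero_mul, sub_zero, one_mul, mul_one, Nat.factorial_zero, Nat.cast_one,
    div_one]
  ring

/-- If `Q` is measurable, bounded on `[1,2]`, and `|Q t| ≤ K log t` for `t ≥ 2`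
(for some `K > 0`), and
`y_m = (-1)^m ∫₁^∞ (log^m t - m log^{m-1} t) Q(t)/t² dt` (which is `∫₁^∞ Q(t)/t² dt`
for `m = 0`, since then the first factor is `1`), then each integral converges
absolutely and, for every complex `s` with `|s-1| < 1`,
`s ∫₁^∞ Q(t) t^{-s-1} dt = ∑_m y_m (s-1)^m / m!`. -/
theorem mul_integral_eq_expansion (Q : ℝ → ℝ) (hmeas : Measurable Q)
    (hbdd : ∃ M : ℝ, ∀ t ∈ Set.Icc (1 : ℝ) 2, |Q t| ≤ M)
    (hK : ∃ K > (0 : ℝ), ∀ t ≥ (2 : ℝ), |Q t| ≤ K * Real.log t)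
    (y : ℕ → ℝ)
    (hy : ∀ m : ℕ, y m = (-1 : ℝ) ^ m *
      ∫ t in Set.Ici (1 : ℝ),
        (Real.log t ^ m - m * Real.log t ^ (m - 1)) * Q t / t ^ 2) :
    (∀ m : ℕ, MeasureTheory.IntegrableOn
      (fun t : ℝ => (Real.log t ^ m - m * Real.log t ^ (m - 1)) * Q t / t ^ 2)
      (Set.Ici (1 : ℝ))) ∧
    ∀ s : ℂ, ‖s - 1‖ < 1 →
      Summable (fun m : ℕ => (y m : ℂ) * (s - 1) ^ m / (Nat.factorial m : ℂ)) ∧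
      s * ∫ t in Set.Ici (1 : ℝ), (Q t : ℂ) * (t : ℂ) ^ (-s - 1) =
        ∑' m : ℕ, (y m : ℂ) * (s - 1) ^ m / (Nat.factorial m : ℂ) := by
  obtain ⟨M, hM⟩ := hbdd
  obtain ⟨K, -, hKb⟩ := hK
  have hQ_growth (δ : ℝ) (hδ : 0 < δ) : ∃ C, ∀ t ≥ 1, |Q t| ≤ C * t ^ δ :=
    exists_abs_le_mul_rpow_of_abs_le_mul_log hM hKb hδ
  have hint := integrableOn_log_pow_mul_div_sq hmeas hQ_growth
  have hsplit (m : ℕ) : (fun t => (log t ^ m - m * log t ^ (m - 1)) * Q t / t ^ 2) =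
      fun t => log t ^ m * Q t / t ^ 2 - m * (log t ^ (m - 1) * Q t / t ^ 2) := by
    funext t
    ring
  have hy' (m : ℕ) : y m = (-1) ^ m * ((∫ t in Ici 1, log t ^ m * Q t / t ^ 2) -
      m * ∫ t in Ici 1, log t ^ (m - 1) * Q t / t ^ 2) := by
    rw [hy, hsplit, integral_sub (hint m) ((hint _).const_mul _), integral_const_mul]
  refine ⟨fun m => hsplit m ▸ (hint m).sub ((hint (m - 1)).const_mul m), fun s hs => ?_⟩
  have h := hasSum_mul_of_hasSum_one_sub_pow_div_factorial
    (hasSum_integral_mul_cpow_neg_sub_one hmeas hQ_growth hs)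
  simp only [← hy'] at h
  exact ⟨h.summable, h.tsum_eq.symm⟩
end
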